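/- arXiv:1602.04623 — 2 statements merged into one kernel-verified Lean document; each statement's English description precedes it below -/
import Mathlib

section
/- If a graph G has an effective competition cover, then k(G) = θ_e(G) − |V(G)| + p(G). -/
/-- A digraph (given by its arc relation) is acyclic if it has no directed cycle. -/
def Digraph.Acyclic {W : Type*} (A : W → W → Prop) : Prop :=
  ∀ v, ¬ Relation.TransGen A v v

/-- The competition graph of a digraph: distinct `x`, `y` are adjacent iff
they have a common out-neighbor. -/
def competitionGraph {W : Type*} (A : W → W → Prop) : SimpleGraph W where
  Adj x y := x ≠ y ∧ ∃ z, A x z ∧ A y z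
  symm := by
    constructor
    rintro x y ⟨h, z, hx, hy⟩
    exact ⟨h.symm, z, hy, hx⟩
  loopless := by
    constructor
    rintro x ⟨h, -⟩
    exact h rfl

/-- `G` together with `k` additional isolated vertices. -/
def addIsolated {V : Type*} (G : SimpleGraph V) (k : ℕ) : SimpleGraph (V ⊕ Fin k) where
  Adj x y := ∃ u v, G.Adj u v ∧ x = Sum.inl u ∧ y = Sum.inl v
  symm := by
    constructor
    rintro x y ⟨u, v, h, rfl, rfl⟩
    exact ⟨v, u, h.symm, rfl, rfl⟩
  loopless := by
    constructor
    rintro x ⟨u, v, h, rfl, hy⟩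
    exact G.irrefl (Sum.inl.inj hy ▸ h)

/-- `F` is an edge clique cover of `G`. -/
def IsEdgeCliqueCover {V : Type*} (G : SimpleGraph V) (F : Finset (Set V)) : Prop :=
  (∀ C ∈ F, G.IsClique C) ∧ ∀ u v, G.Adj u v → ∃ C ∈ F, u ∈ C ∧ v ∈ C

/-- The edge clique cover number `θ_e(G)`. -/
noncomputable def eccNumber {V : Type*} (G : SimpleGraph V) : ℕ :=
  sInf {n | ∃ F : Finset (Set V), IsEdgeCliqueCover G F ∧ F.card = n}

/-- An acyclic digraph `A` on `V ⊕ Fin k` realizes `G` with `k` added isolated vertices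
if its competition graph is `G` together with `k` isolated vertices. -/
def Realizes {V : Type*} (G : SimpleGraph V) (k : ℕ)
    (A : (V ⊕ Fin k) → (V ⊕ Fin k) → Prop) : Prop :=
  Digraph.Acyclic A ∧ competitionGraph A = addIsolated G k

/-- The competition number `k(G)`. -/
noncomputable def compNumber {V : Type*} (G : SimpleGraph V) : ℕ :=
  sInf {k | ∃ A : (V ⊕ Fin k) → (V ⊕ Fin k) → Prop, Realizes G k A}

/-- The primary predator index `p(G)`: the maximum number of in-degree-0 vertices over
all acyclic digraphs whose competition graph is `G` plus `k(G)` isolated vertices. -/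
noncomputable def predatorIndex {V : Type*} (G : SimpleGraph V) : ℕ :=
  sSup {n | ∃ A : (V ⊕ Fin (compNumber G)) → (V ⊕ Fin (compNumber G)) → Prop,
    Realizes G (compNumber G) A ∧ {v | ∀ u, ¬ A u v}.ncard = n}

/-- `C` is a maximal clique of `G`. -/
def IsMaximalClique {V : Type*} (G : SimpleGraph V) (C : Set V) : Prop :=
  G.IsClique C ∧ ∀ D : Set V, G.IsClique D → C ⊆ D → C = D

/-- The acyclic digraph `A` accompanies the minimum edge clique cover `𝒞`. -/
def Accompanies {V : Type*} (G : SimpleGraph V) (𝒞 : Finset (Set V))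
    (A : (V ⊕ Fin (compNumber G)) → (V ⊕ Fin (compNumber G)) → Prop) : Prop :=
  Realizes G (compNumber G) A ∧
  ∃ w : 𝒞 → (V ⊕ Fin (compNumber G)), Function.Injective w ∧
    (∀ C : 𝒞, ∀ v ∈ (C : Set V), A (Sum.inl v) (w C)) ∧
    {x | ∃ u, A u x} = Set.range w

/-- `𝒞` is an effective competition cover of `G`. -/
def IsEffectiveCompetitionCover {V : Type*} (G : SimpleGraph V) (𝒞 : Finset (Set V)) : Prop :=
  IsEdgeCliqueCover G 𝒞 ∧ 𝒞.card = eccNumber G ∧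
  (∀ C ∈ 𝒞, IsMaximalClique G C) ∧
  ∃ A : (V ⊕ Fin (compNumber G)) → (V ⊕ Fin (compNumber G)) → Prop, Accompanies G 𝒞 A

/-- The diamond graph: `K₄` minus the edge between vertices `2` and `3`. -/
def diamondGraph : SimpleGraph (Fin 4) where
  Adj i j := i ≠ j ∧ ¬(i = 2 ∧ j = 3) ∧ ¬(i = 3 ∧ j = 2)
  symm := by
    constructor
    rintro i j ⟨h, h1, h2⟩
    exact ⟨h.symm, fun ⟨a, b⟩ => h2 ⟨b, a⟩, fun ⟨a, b⟩ => h1 ⟨b, a⟩⟩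
  loopless := by
    constructor
    rintro i ⟨h, -⟩
    exact h rfl

/-- `G` contains `H` as an induced subgraph. -/
def ContainsInduced {V W : Type*} (G : SimpleGraph V) (H : SimpleGraph W) : Prop :=
  ∃ f : W ↪ V, ∀ a b, G.Adj (f a) (f b) ↔ H.Adj a b

/-- `G` is diamond-free: it has no induced diamond. -/
def DiamondFree {V : Type*} (G : SimpleGraph V) : Prop :=
  ¬ ContainsInduced G diamondGraph

/-- `G` is chordal: it has no induced cycle of length at least `4`. -/
def Chordal {V : Type*} (G : SimpleGraph V) : Prop :=
  ∀ n, 4 ≤ n → ¬ ContainsInduced G (SimpleGraph.cycleGraph n)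

/-- The edge `uv` is occupied by `C`: `C` is the unique maximal clique covering `uv`. -/
def Occupies {V : Type*} (G : SimpleGraph V) (C : Set V) (u v : V) : Prop :=
  G.Adj u v ∧ IsMaximalClique G C ∧ u ∈ C ∧ v ∈ C ∧
    ∀ C' : Set V, IsMaximalClique G C' → u ∈ C' → v ∈ C' → C' = C

/-!
In any digraph realizing `G` with `k` isolated vertices, the prey sets of the vertices
of positive in-degree form an edge clique cover of `G`, so there are at least `θ_e(G)` such
vertices and at most `|V| + k - θ_e(G)` vertices of in-degree zero. A digraph accompanying a
minimum edge clique cover has exactly `θ_e(G)` vertices of positive in-degree, so for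
`k = k(G)` it attains this bound, i.e. `p(G) = |V| + k(G) - θ_e(G)`.
-/

section CompetitionGraph

variable {V : Type*} {k : ℕ} {G : SimpleGraph V} {A : (V ⊕ Fin k) → (V ⊕ Fin k) → Prop}

lemma isClique_preys_of_competitionGraph_eq (hA : competitionGraph A = addIsolated G k)
    (z : V ⊕ Fin k) : G.IsClique {v | A (Sum.inl v) z} := by
  intro u hu v hv huv
  have hadj : (competitionGraph A).Adj (Sum.inl u) (Sum.inl v) :=
    ⟨Sum.inl_injective.ne huv, z, hu, hv⟩
  rw [hA] at hadj
  obtain ⟨a, b, hab, ha, hb⟩ := hadj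
  rwa [Sum.inl_injective ha, Sum.inl_injective hb]

lemma exists_common_prey_of_competitionGraph_eq (hA : competitionGraph A = addIsolated G k)
    {u v : V} (huv : G.Adj u v) : ∃ z, A (Sum.inl u) z ∧ A (Sum.inl v) z := by
  have hadj : (competitionGraph A).Adj (Sum.inl u) (Sum.inl v) := by
    rw [hA]
    exact ⟨u, v, huv, rfl, rfl⟩
  exact hadj.2

lemma isEdgeCliqueCover_image_preys (hA : competitionGraph A = addIsolated G k)
    (S : Finset (V ⊕ Fin k)) (hS : ∀ u z, A u z → z ∈ S) :
    IsEdgeCliqueCover G (S.image fun z => {v | A (Sum.inl v) z}) := by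
  refine ⟨?_, fun u v huv => ?_⟩
  · simp only [Finset.mem_image]
    rintro C ⟨z, -, rfl⟩
    exact isClique_preys_of_competitionGraph_eq hA z
  · obtain ⟨z, hu, hv⟩ := exists_common_prey_of_competitionGraph_eq hA huv
    exact ⟨_, Finset.mem_image_of_mem _ (hS _ z hu), hu, hv⟩

lemma eccNumber_le_card {F : Finset (Set V)} (hF : IsEdgeCliqueCover G F) :
    eccNumber G ≤ F.card :=
  Nat.sInf_le ⟨F, hF, rfl⟩

lemma eccNumber_le_ncard_of_competitionGraph_eq [Finite V]
    (hA : competitionGraph A = addIsolated G k) : eccNumber G ≤ {z | ∃ u, A u z}.ncard := by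
  have hfin := Set.toFinite {z | ∃ u, A u z}
  calc eccNumber G ≤ (hfin.toFinset.image fun z => {v | A (Sum.inl v) z}).card :=
        eccNumber_le_card <| isEdgeCliqueCover_image_preys hA _ fun u z h =>
          hfin.mem_toFinset.2 ⟨u, h⟩
    _ ≤ hfin.toFinset.card := Finset.card_image_le
    _ = {z | ∃ u, A u z}.ncard := (Set.ncard_eq_toFinset_card _ hfin).symm

end CompetitionGraph

lemma ncard_setOf_forall_not_add_ncard_setOf_exists {W : Type*} [Finite W] (A : W → W → Prop) :
    {z | ∀ u, ¬ A u z}.ncard + {z | ∃ u, A u z}.ncard = Nat.card W := by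
  have hcompl : {z | ∀ u, ¬ A u z} = {z | ∃ u, A u z}ᶜ := by
    ext z
    simp
  rw [hcompl, add_comm, Set.ncard_add_ncard_compl]

section Sources

variable {V : Type*} [Finite V] {G : SimpleGraph V}

lemma ncard_sources_add_eccNumber_le_of_competitionGraph_eq {k : ℕ}
    {A : (V ⊕ Fin k) → (V ⊕ Fin k) → Prop} (hA : competitionGraph A = addIsolated G k) :
    {z | ∀ u, ¬ A u z}.ncard + eccNumber G ≤ Nat.card V + k := by
  have hsum := ncard_setOf_forall_not_add_ncard_setOf_exists A
  have hecc := eccNumber_le_ncard_of_competitionGraph_eq hA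
  rw [Nat.card_sum, Nat.card_fin] at hsum
  omega

lemma Accompanies.ncard_sources_add_card {𝒞 : Finset (Set V)}
    {A : (V ⊕ Fin (compNumber G)) → (V ⊕ Fin (compNumber G)) → Prop}
    (hA : Accompanies G 𝒞 A) :
    {z | ∀ u, ¬ A u z}.ncard + 𝒞.card = Nat.card V + compNumber G := by
  obtain ⟨-, w, hw, -, hrange⟩ := hA
  have hsum := ncard_setOf_forall_not_add_ncard_setOf_exists A
  rw [hrange, Set.ncard_range_of_injective hw, Nat.card_eq_finsetCard,
    Nat.card_sum, Nat.card_fin] at hsum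
  exact hsum

/-- The accompanying digraph has the fewest possible vertices of positive in-degree. -/
lemma IsEffectiveCompetitionCover.predatorIndex_add_eccNumber {𝒞 : Finset (Set V)}
    (h𝒞 : IsEffectiveCompetitionCover G 𝒞) :
    predatorIndex G + eccNumber G = Nat.card V + compNumber G := by
  obtain ⟨-, hcard, -, A, hA⟩ := h𝒞
  have hsources := hA.ncard_sources_add_card
  have hgreatest : IsGreatest
      {n | ∃ A : (V ⊕ Fin (compNumber G)) → (V ⊕ Fin (compNumber G)) → Prop,
        Realizes G (compNumber G) A ∧ {v | ∀ u, ¬ A u v}.ncard = n}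
      (Nat.card V + compNumber G - eccNumber G) := by
    refine ⟨⟨A, hA.1, by omega⟩, ?_⟩
    rintro n ⟨A', hA', rfl⟩
    have := ncard_sources_add_eccNumber_le_of_competitionGraph_eq hA'.2
    omega
  rw [predatorIndex, hgreatest.csSup_eq]
  omega

end Sources

/-- if `G` has an effective competition cover then
`k(G) = θ_e(G) − |V(G)| + p(G)`. -/
theorem stmt14 {V : Type*} [Fintype V] (G : SimpleGraph V)
    (h : ∃ 𝒞 : Finset (Set V), IsEffectiveCompetitionCover G 𝒞) :
    (compNumber G : ℤ) = (eccNumber G : ℤ) - (Fintype.card V : ℤ) + (predatorIndex G : ℤ) := by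
  obtain ⟨𝒞, h𝒞⟩ := h
  have := h𝒞.predatorIndex_add_eccNumber
  rw [Fintype.card_eq_nat_card]
  omega
end

section
/- Let G be a graph with at least one edge whose set 𝒞 of all maximal cliques has the property that every clique in 𝒞 occupies some edge. Then k(G) = θ_e(G) − |V(G)| + p(G). -/
/-
In a realization `A` of `G` with `k` isolated vertices, the in-neighbourhood in `V` of each prey
is a clique and these cliques cover every edge, so `A` has at least `θ_e(G)` preys and hence at
most `|V| + k − θ_e(G)` sources. Conversely, attach to every vertex `z` a maximal clique `f z`
containing its in-neighbourhood and redirect each arc `v → z` to the deepest vertex `z'` with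
`f z' = f z`. Depth strictly increases along the new arcs, the competition graph is unchanged, and
there is at most one prey per maximal clique. If every maximal clique occupies an edge, the member
of an edge clique cover containing that edge extends only to this clique, so there are at most
`θ_e(G)` maximal cliques, and for `k = k(G)` the bound on sources is attained.
-/

open Sum

section Digraph

variable {W : Type*} (A : W → W → Prop)

def preySet : Set W := {x | ∃ u, A u x}

noncomputable def depth (x : W) : ℕ := {y | Relation.TransGen A y x}.ncard

variable {A}

lemma Digraph.acyclic_of_lt {r : W → ℕ} (h : ∀ x y, A x y → r x < r y) :
    Digraph.Acyclic A := by
  intro x hx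
  have key : ∀ y, Relation.TransGen A x y → r x < r y := by
    intro y hy
    induction hy with
    | single hxy => exact h _ _ hxy
    | tail _ hyz ih => exact ih.trans (h _ _ hyz)
  exact lt_irrefl _ (key x hx)

lemma depth_lt_depth [Finite W] (hA : Digraph.Acyclic A) {x y : W} (h : A x y) :
    depth A x < depth A y :=
  Set.ncard_lt_ncard (Set.ssubset_def.mpr
    ⟨fun _ hz => hz.tail h, fun hsub => hA x (hsub (.single h))⟩)

lemma ncard_sources_add_ncard_preySet [Finite W] :
    {v | ∀ u, ¬ A u v}.ncard + (preySet A).ncard = Nat.card W := by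
  have hsources : {v | ∀ u, ¬ A u v} = (preySet A)ᶜ := by
    ext
    simp [preySet]
  rw [hsources, add_comm, Set.ncard_add_ncard_compl]

end Digraph

lemma exists_fiberwise_argmax {W β : Type*} [Finite W] [Nonempty W] (f : W → β) (r : W → ℕ) :
    ∃ g : β → W, ∀ z, f (g (f z)) = f z ∧ r z ≤ r (g (f z)) := by
  have hfiber : ∀ b, ∃ w, ∀ z, f z = b → f w = b ∧ r z ≤ r w := by
    intro b
    by_cases h : ∃ z, f z = b
    · obtain ⟨w, hw, hmax⟩ := Set.exists_max_image {z | f z = b} r (Set.toFinite _) h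
      exact ⟨w, fun z hz => ⟨hw, hmax z hz⟩⟩
    · exact ⟨Classical.arbitrary W, fun z hz => (h ⟨z, hz⟩).elim⟩
  choose g hg using hfiber
  exact ⟨g, fun z => hg (f z) z rfl⟩

section Cliques

variable {V : Type*} (G : SimpleGraph V)

def maximalCliques : Set (Set V) := {C | IsMaximalClique G C}

variable {G}

lemma exists_isMaximalClique_superset [Finite V] {K : Set V} (hK : G.IsClique K) :
    ∃ D, IsMaximalClique G D ∧ K ⊆ D := by
  obtain ⟨D, hKD, hD⟩ := Finite.exists_le_maximal (p := G.IsClique) hK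
  exact ⟨D, ⟨hD.1, fun E hE hDE => hDE.antisymm (hD.2 hE hDE)⟩, hKD⟩

variable (G) in
lemma exists_isMaximalClique_extension [Finite V] :
    ∃ ext : Set V → Set V, ∀ K, G.IsClique K → IsMaximalClique G (ext K) ∧ K ⊆ ext K := by
  have hext : ∀ K : Set V, ∃ D, G.IsClique K → IsMaximalClique G D ∧ K ⊆ D := by
    intro K
    by_cases hK : G.IsClique K
    · exact (exists_isMaximalClique_superset hK).imp fun _ h _ => h
    · exact ⟨∅, fun h => (hK h).elim⟩
  exact Classical.skolem.mp hext

lemma isEdgeCliqueCover_maximalCliques [Finite V] :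
    IsEdgeCliqueCover G (maximalCliques G).toFinite.toFinset := by
  refine ⟨fun C hC => ((Set.Finite.mem_toFinset _).mp hC).1, fun u v huv => ?_⟩
  obtain ⟨D, hD, huvD⟩ := exists_isMaximalClique_superset (G.isClique_pair.mpr fun _ => huv)
  exact ⟨D, (Set.Finite.mem_toFinset _).mpr hD, huvD (by simp), huvD (by simp)⟩

lemma ncard_maximalCliques_le_card [Finite V]
    (hocc : ∀ C : Set V, IsMaximalClique G C → ∃ u v : V, Occupies G C u v)
    {F : Finset (Set V)} (hF : IsEdgeCliqueCover G F) : (maximalCliques G).ncard ≤ F.card := by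
  obtain ⟨ext, hext⟩ := exists_isMaximalClique_extension G
  have hsub : maximalCliques G ⊆ ext '' F := by
    intro C hC
    obtain ⟨u, v, huv, -, hu, hv, huniq⟩ := hocc C hC
    obtain ⟨K, hKF, huK, hvK⟩ := hF.2 u v huv
    obtain ⟨hmax, hKsub⟩ := hext K (hF.1 K hKF)
    exact ⟨K, hKF, huniq _ hmax (hKsub huK) (hKsub hvK)⟩
  calc (maximalCliques G).ncard ≤ (ext '' F).ncard := Set.ncard_le_ncard hsub (Set.toFinite _)
    _ ≤ (F : Set (Set V)).ncard := Set.ncard_image_le F.finite_toSet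
    _ = F.card := Set.ncard_coe_finset F

lemma ncard_maximalCliques_le_eccNumber [Finite V]
    (hocc : ∀ C : Set V, IsMaximalClique G C → ∃ u v : V, Occupies G C u v) :
    (maximalCliques G).ncard ≤ eccNumber G :=
  le_csInf ⟨_, _, isEdgeCliqueCover_maximalCliques, rfl⟩
    fun _ ⟨_, hF, hcard⟩ => hcard ▸ ncard_maximalCliques_le_card hocc hF

end Cliques

section Realization

variable {V : Type*} {G : SimpleGraph V} {k : ℕ} {A : V ⊕ Fin k → V ⊕ Fin k → Prop}

lemma addIsolated_adj_inl {a b : V} : (addIsolated G k).Adj (inl a) (inl b) ↔ G.Adj a b :=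
  ⟨fun ⟨_, _, h, ha, hb⟩ => inl_injective ha ▸ inl_injective hb ▸ h, fun h => ⟨a, b, h, rfl, rfl⟩⟩

lemma Realizes.exists_common_prey (hA : Realizes G k A) {a b : V} (h : G.Adj a b) :
    ∃ z, A (inl a) z ∧ A (inl b) z :=
  (hA.2 ▸ addIsolated_adj_inl.mpr h : (competitionGraph A).Adj (inl a) (inl b)).2

lemma Realizes.isClique_inNbhd (hA : Realizes G k A) (z : V ⊕ Fin k) :
    G.IsClique {v | A (inl v) z} := fun u hu v hv huv =>
  addIsolated_adj_inl.mp (hA.2 ▸ ⟨fun h => huv (inl_injective h), z, hu, hv⟩ :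
    (addIsolated G k).Adj (inl u) (inl v))

lemma Realizes.eccNumber_le_ncard_preySet [Finite V] (hA : Realizes G k A) :
    eccNumber G ≤ (preySet A).ncard := by
  classical
  let F := (preySet A).toFinite.toFinset.image fun z => {v | A (inl v) z}
  have hF : IsEdgeCliqueCover G F := by
    refine ⟨?_, fun u v huv => ?_⟩
    · simp only [F, Finset.forall_mem_image]
      exact fun z _ => hA.isClique_inNbhd z
    · obtain ⟨z, hu, hv⟩ := hA.exists_common_prey huv
      exact ⟨_, Finset.mem_image_of_mem _ ((Set.Finite.mem_toFinset _).mpr ⟨_, hu⟩), hu, hv⟩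
  calc eccNumber G ≤ F.card := Nat.sInf_le ⟨F, hF, rfl⟩
    _ ≤ (preySet A).toFinite.toFinset.card := Finset.card_image_le
    _ = (preySet A).ncard := (Set.ncard_eq_toFinset_card _ _).symm

lemma exists_realizes_of_isEdgeCliqueCover {F : Finset (Set V)} (hF : IsEdgeCliqueCover G F) :
    ∃ A, Realizes G F.card A := by
  let C : Fin F.card → Set V := fun i => F.equivFin.symm i
  refine ⟨fun x y => ∃ v i, x = inl v ∧ y = inr i ∧ v ∈ C i, ?_, ?_⟩
  · refine Digraph.acyclic_of_lt (r := Sum.elim (fun _ => 0) (fun _ => 1)) ?_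
    rintro _ _ ⟨v, i, rfl, rfl, -⟩
    simp
  · ext x y
    constructor
    · rintro ⟨hne, _, ⟨u, i, rfl, rfl, hu⟩, ⟨v, j, rfl, hij, hv⟩⟩
      obtain rfl := inr_injective hij
      exact ⟨u, v, hF.1 _ (F.equivFin.symm i).2 hu hv fun h => hne (h ▸ rfl), rfl, rfl⟩
    · rintro ⟨u, v, huv, rfl, rfl⟩
      obtain ⟨D, hD, hu, hv⟩ := hF.2 u v huv
      have hCD : C (F.equivFin ⟨D, hD⟩) = D := by simp [C]
      exact ⟨fun h => G.ne_of_adj huv (inl_injective h), inr (F.equivFin ⟨D, hD⟩),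
        ⟨u, _, rfl, rfl, by rwa [hCD]⟩, ⟨v, _, rfl, rfl, by rwa [hCD]⟩⟩

variable (G) in
lemma exists_realizes_compNumber [Finite V] : ∃ A, Realizes G (compNumber G) A :=
  Nat.sInf_mem (s := {k | ∃ A, Realizes G k A})
    ⟨_, exists_realizes_of_isEdgeCliqueCover isEdgeCliqueCover_maximalCliques⟩

variable (A) in
def reroute (f : V ⊕ Fin k → Set V) (g : Set V → V ⊕ Fin k) : V ⊕ Fin k → V ⊕ Fin k → Prop :=
  fun x y => ∃ v z, A (inl v) z ∧ x = inl v ∧ y = g (f z)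

variable {f : V ⊕ Fin k → Set V} {g : Set V → V ⊕ Fin k}

lemma acyclic_reroute [Finite V] (hA : Digraph.Acyclic A)
    (hg : ∀ z, depth A z ≤ depth A (g (f z))) : Digraph.Acyclic (reroute A f g) :=
  Digraph.acyclic_of_lt (r := depth A) <| by
    rintro _ _ ⟨v, z, hvz, rfl, rfl⟩
    exact (depth_lt_depth hA hvz).trans_le (hg z)

lemma competitionGraph_reroute (hA : Realizes G k A)
    (hf : ∀ z, G.IsClique (f z) ∧ {v | A (inl v) z} ⊆ f z) (hg : ∀ z, f (g (f z)) = f z) :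
    competitionGraph (reroute A f g) = addIsolated G k := by
  ext x y
  constructor
  · rintro ⟨hne, _, ⟨u, z, hu, rfl, rfl⟩, ⟨v, z', hv, rfl, hzz'⟩⟩
    have hfz : f z' = f z := by rw [← hg z, hzz', hg z']
    exact ⟨u, v, (hf z).1 ((hf z).2 hu) (hfz ▸ (hf z').2 hv) fun h => hne (h ▸ rfl), rfl, rfl⟩
  · rintro ⟨u, v, huv, rfl, rfl⟩
    obtain ⟨z, hu, hv⟩ := hA.exists_common_prey huv
    exact ⟨fun h => G.ne_of_adj huv (inl_injective h), _,
      ⟨u, z, hu, rfl, rfl⟩, ⟨v, z, hv, rfl, rfl⟩⟩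

lemma preySet_reroute_subset : preySet (reroute A f g) ⊆ g '' Set.range f := by
  rintro _ ⟨_, v, z, -, -, rfl⟩
  exact ⟨f z, ⟨z, rfl⟩, rfl⟩

lemma Realizes.exists_realizes_ncard_preySet_le [Finite V] [Nonempty V] (hA : Realizes G k A) :
    ∃ A', Realizes G k A' ∧ (preySet A').ncard ≤ (maximalCliques G).ncard := by
  obtain ⟨ext, hext⟩ := exists_isMaximalClique_extension G
  let f z := ext {v | A (inl v) z}
  have hf z : IsMaximalClique G (f z) ∧ {v | A (inl v) z} ⊆ f z := hext _ (hA.isClique_inNbhd z)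
  obtain ⟨g, hg⟩ := exists_fiberwise_argmax f (depth A)
  refine ⟨reroute A f g, ⟨acyclic_reroute hA.1 fun z => (hg z).2,
    competitionGraph_reroute hA (fun z => ⟨(hf z).1.1, (hf z).2⟩) fun z => (hg z).1⟩, ?_⟩
  have hrange : Set.range f ⊆ maximalCliques G := Set.range_subset_iff.mpr fun z => (hf z).1
  calc (preySet (reroute A f g)).ncard ≤ (g '' maximalCliques G).ncard :=
        Set.ncard_le_ncard (preySet_reroute_subset.trans (Set.image_mono hrange)) (Set.toFinite _)
    _ ≤ (maximalCliques G).ncard := Set.ncard_image_le (Set.toFinite _)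

end Realization

/-- if every maximal clique of `G` occupies some edge, then
`k(G) = θ_e(G) − |V(G)| + p(G)`. -/
theorem stmt16 {V : Type*} [Fintype V] (G : SimpleGraph V)
    (hedge : ∃ u v : V, G.Adj u v)
    (hocc : ∀ C : Set V, IsMaximalClique G C → ∃ u v : V, Occupies G C u v) :
    (compNumber G : ℤ) = (eccNumber G : ℤ) - (Fintype.card V : ℤ) + (predatorIndex G : ℤ) := by
  obtain ⟨u, -, -⟩ := hedge
  have : Nonempty V := ⟨u⟩
  obtain ⟨A₀, hA₀⟩ := exists_realizes_compNumber G
  obtain ⟨A, hA, hAprey⟩ := hA₀.exists_realizes_ncard_preySet_le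
  have hθ := ncard_maximalCliques_le_eccNumber hocc
  have hcount (A' : V ⊕ Fin (compNumber G) → V ⊕ Fin (compNumber G) → Prop) :
      {v | ∀ u, ¬ A' u v}.ncard + (preySet A').ncard = Fintype.card V + compNumber G := by
    rw [ncard_sources_add_ncard_preySet, Nat.card_sum, Nat.card_eq_fintype_card, Nat.card_fin]
  have hp : predatorIndex G = {v | ∀ u, ¬ A u v}.ncard := by
    refine IsGreatest.csSup_eq ⟨⟨A, hA, rfl⟩, ?_⟩
    rintro _ ⟨A', hA', rfl⟩
    have := hcount A
    have := hcount A'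
    have := hA'.eccNumber_le_ncard_preySet
    omega
  have := hcount A
  have := hA.eccNumber_le_ncard_preySet
  omega
end
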